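/- Let d ≥ 2, ω a primitive d-th root of unity, n ≡ 0 (mod d), and a, b, c non-negative integers. If two of a, b, c are ≡ 1 (mod d), then qmultinomial(n−2+a+b+c; n−2,a,b,c)(ω) = 0. -/
import Mathlib

/- The q-integer [n]_q = 1 + q + ... + q^{n-1}, as a polynomial in q over ℤ. -/
noncomputable def qint (n : ℕ) : Polynomial ℤ := ∑ i ∈ Finset.range n, Polynomial.X ^ i

/- The q-factorial [n]_q! = [1]_q [2]_q ⋯ [n]_q. -/
noncomputable def qfact (n : ℕ) : Polynomial ℤ := ∏ i ∈ Finset.range n, qint (i + 1)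

/- The Gaussian (q-)binomial coefficient, defined via the q-Pascal recurrence
`[a+1, b+1]_q = [a, b]_q + q^{b+1}·[a, b+1]_q`; it equals
`[a]_q!/([b]_q!·[a−b]_q!)` for `b ≤ a` and is `0` for `b > a`. -/
noncomputable def qbinom : ℕ → ℕ → Polynomial ℤ
  | _, 0 => 1
  | 0, _ + 1 => 0
  | a + 1, b + 1 => qbinom a b + Polynomial.X ^ (b + 1) * qbinom a (b + 1)

open Polynomial

private lemma qint_ne_zero' (k : ℕ) (hk : 1 ≤ k) : qint k ≠ 0 := by
  intro h
  have : (qint k).eval 1 = (k : ℤ) := by simp [qint]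
  rw [h] at this; simp at this; omega

private lemma qfact_ne_zero' (m : ℕ) : qfact m ≠ 0 := by
  unfold qfact
  exact Finset.prod_ne_zero_iff.mpr fun i _ => qint_ne_zero' _ (Nat.succ_le_succ (Nat.zero_le _))

private lemma map_qfact_ne_zero' (m : ℕ) : (qfact m).map (algebraMap ℤ ℂ) ≠ 0 := by
  rw [Polynomial.map_ne_zero_iff (algebraMap ℤ ℂ).injective_int]
  exact qfact_ne_zero' m

private lemma rm_qint' (d : ℕ) (hd : 2 ≤ d) (ω : ℂ) (hω : IsPrimitiveRoot ω d) (k : ℕ)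
    (hk : 1 ≤ k) :
    rootMultiplicity ω ((qint k).map (algebraMap ℤ ℂ)) = if d ∣ k then 1 else 0 := by
  have hω1 : ω ≠ 1 := hω.ne_one (by omega)
  have hmul : (qint k).map (algebraMap ℤ ℂ) * (X - 1) = X ^ k - 1 := by
    have := geom_sum_mul (X : Polynomial ℂ) k
    simpa [qint, Polynomial.map_sum] using this
  have hXk : (X ^ k - 1 : Polynomial ℂ) ≠ 0 := by
    intro h
    have : (X ^ k - 1 : Polynomial ℂ).eval 0 = 0 := by rw [h]; simp
    simp [zero_pow (by omega : k ≠ 0)] at this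
  have hsep : (X ^ k - 1 : Polynomial ℂ).Separable :=
    Polynomial.X_pow_sub_one_separable_iff.mpr (Nat.cast_ne_zero.mpr (by omega))
  have hle : rootMultiplicity ω (X ^ k - 1 : Polynomial ℂ) ≤ 1 :=
    rootMultiplicity_le_one_of_separable hsep ω
  have hX1 : rootMultiplicity ω (X - 1 : Polynomial ℂ) = 0 :=
    rootMultiplicity_eq_zero (by simp [IsRoot, sub_eq_zero, hω1])
  have hadd : rootMultiplicity ω ((qint k).map (algebraMap ℤ ℂ))
      + rootMultiplicity ω (X - 1 : Polynomial ℂ)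
      = rootMultiplicity ω (X ^ k - 1 : Polynomial ℂ) := by
    rw [← rootMultiplicity_mul (hmul ▸ hXk), hmul]
  by_cases hdk : d ∣ k
  · have hroot : IsRoot (X ^ k - 1 : Polynomial ℂ) ω := by
      simp [IsRoot, sub_eq_zero, hω.pow_eq_one_iff_dvd, hdk]
    have hpos : 0 < rootMultiplicity ω (X ^ k - 1 : Polynomial ℂ) :=
      (rootMultiplicity_pos hXk).mpr hroot
    rw [if_pos hdk]; omega
  · have : rootMultiplicity ω (X ^ k - 1 : Polynomial ℂ) = 0 := by
      apply rootMultiplicity_eq_zero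
      simp only [IsRoot, eval_sub, eval_pow, eval_X, eval_one, sub_eq_zero]
      rw [hω.pow_eq_one_iff_dvd]
      exact hdk
    rw [if_neg hdk]; omega

private lemma rm_qfact' (d : ℕ) (hd : 2 ≤ d) (ω : ℂ) (hω : IsPrimitiveRoot ω d) (m : ℕ) :
    rootMultiplicity ω ((qfact m).map (algebraMap ℤ ℂ)) = m / d := by
  induction m with
  | zero => simp [qfact, Nat.zero_div]
  | succ m ih =>
    have hstep : qfact (m + 1) = qfact m * qint (m + 1) := Finset.prod_range_succ _ _
    rw [hstep, Polynomial.map_mul, rootMultiplicity_mul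
        (by rw [← Polynomial.map_mul, ← hstep]; exact map_qfact_ne_zero' _),
      ih, rm_qint' d hd ω hω (m+1) (by omega), Nat.succ_div]

private lemma arith' (d n a b c : ℕ) (hd : 2 ≤ d) (hdn : d ∣ n) (hn : 2 ≤ n)
    (ha : a % d = 1) (hb : b % d = 1) :
    (n-2)/d + a/d + b/d + c/d < (n-2+a+b+c)/d := by
  have hd0 : 0 < d := by omega
  obtain ⟨q, rfl⟩ := hdn
  have hq : 1 ≤ q := by
    by_contra h
    have hq0 : q = 0 := by omega
    subst hq0; simp at hn
  obtain ⟨q', rfl⟩ : ∃ q', q = q' + 1 := ⟨q - 1, by omega⟩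
  have key : ∀ x r : ℕ, r < d → (r + x * d) / d = x := fun x r hr => by
    rw [Nat.add_mul_div_right _ _ hd0, Nat.div_eq_of_lt hr, zero_add]
  have ha' := Nat.div_add_mod a d
  have hb' := Nat.div_add_mod b d
  have hc' := Nat.div_add_mod c d
  have hcd : c % d < d := Nat.mod_lt _ hd0
  have hh : d * (q' + 1) = q' * d + d := by ring
  have e1 : d * (q' + 1) - 2 = (d-2) + q'*d := by omega
  have e2 : d * (q' + 1) - 2 + a + b + c = c % d + (q' + a/d + b/d + c/d + 1) * d := by
    have h1 : (q' + a/d + b/d + c/d + 1) * d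
        = q'*d + d*(a/d) + d*(b/d) + d*(c/d) + d := by ring
    omega
  rw [e2, key _ _ hcd, e1, key _ _ (by omega)]
  omega

/-- Let `d ≥ 2`, `ω` a primitive `d`-th root of unity, `n ≡ 0 (mod d)`
with `n ≥ 2`, and `a, b, c` non-negative integers two of which are `≡ 1 (mod d)`.
Then the q-multinomial `M = qmultinomial(n−2+a+b+c; n−2,a,b,c)`, characterised by
`M·([n−2]_q!·[a]_q!·[b]_q!·[c]_q!) = [n−2+a+b+c]_q!`, vanishes at `ω`. -/
theorem qmultinomial_eval_zero
    (d : ℕ) (hd : 2 ≤ d) (ω : ℂ) (hω : IsPrimitiveRoot ω d)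
    (n : ℕ) (hdn : d ∣ n) (hn : 2 ≤ n)
    (a b c : ℕ)
    (hcong : (a % d = 1 ∧ b % d = 1) ∨ (a % d = 1 ∧ c % d = 1) ∨ (b % d = 1 ∧ c % d = 1))
    (M : Polynomial ℤ)
    (hM : M * (qfact (n - 2) * qfact a * qfact b * qfact c) = qfact (n - 2 + a + b + c)) :
    Polynomial.aeval ω M = 0 := by
  set φ := algebraMap ℤ ℂ
  have hM' : M.map φ * ((qfact (n-2)).map φ * (qfact a).map φ * (qfact b).map φ
      * (qfact c).map φ) = (qfact (n - 2 + a + b + c)).map φ := by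
    rw [← Polynomial.map_mul, ← Polynomial.map_mul, ← Polynomial.map_mul,
      ← Polynomial.map_mul, hM]
  have hne : M.map φ * ((qfact (n-2)).map φ * (qfact a).map φ * (qfact b).map φ
      * (qfact c).map φ) ≠ 0 := by
    rw [hM']; exact map_qfact_ne_zero' _
  have h1 : (qfact (n-2)).map φ * (qfact a).map φ ≠ 0 := fun h => hne (by rw [h]; ring)
  have h2 : (qfact (n-2)).map φ * (qfact a).map φ * (qfact b).map φ ≠ 0 :=
    fun h => hne (by rw [h]; ring)
  have h3 : (qfact (n-2)).map φ * (qfact a).map φ * (qfact b).map φ * (qfact c).map φ ≠ 0 :=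
    fun h => hne (by rw [h]; ring)
  have hrm : rootMultiplicity ω (M.map φ) + ((n-2)/d + a/d + b/d + c/d)
      = (n - 2 + a + b + c)/d := by
    rw [← rm_qfact' d hd ω hω (n - 2 + a + b + c), ← hM', rootMultiplicity_mul hne,
      rootMultiplicity_mul h3, rootMultiplicity_mul h2, rootMultiplicity_mul h1,
      rm_qfact' d hd ω hω, rm_qfact' d hd ω hω, rm_qfact' d hd ω hω, rm_qfact' d hd ω hω]
  have hlt : (n-2)/d + a/d + b/d + c/d < (n - 2 + a + b + c)/d := by
    rcases hcong with ⟨ha, hb⟩ | ⟨ha, hc⟩ | ⟨hb, hc⟩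
    · exact arith' d n a b c hd hdn hn ha hb
    · have := arith' d n a c b hd hdn hn ha hc
      have e : n - 2 + a + c + b = n - 2 + a + b + c := by omega
      rw [e] at this; omega
    · have := arith' d n b c a hd hdn hn hb hc
      have e : n - 2 + b + c + a = n - 2 + a + b + c := by omega
      rw [e] at this; omega
  have hpos : 0 < rootMultiplicity ω (M.map φ) := by omega
  have hM0 : M.map φ ≠ 0 := fun h => hne (by rw [h]; ring)
  have hroot : IsRoot (M.map φ) ω := (rootMultiplicity_pos hM0).mp hpos
  rw [aeval_def, ← eval_map]
  exact hroot
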